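/- arXiv:1404.0139 — 4 statements merged into one kernel-verified Lean document; each statement's English description precedes it below -/
import Mathlib

section
/- Along any solution X of the discrete Keller–Segel particle system on [0,T), the second moment Π²(t) = ∑_{i=1}^N X_i(t)² satisfies the exact identity (1/2) d/dt Π²(t) = (N−1)(1 − χ h_N N) for every t ∈ [0,T). -/
open Filter

noncomputable section

/-- `h_N = 1/(N+1)`. -/
def hN (N : ℕ) : ℝ := 1 / (N + 1)

/-- Right-hand side of the discrete Keller–Segel particle ODE, with the convention that
the boundary terms `1/(X_1 - X_0)` and `1/(X_{N+1} - X_N)` are set to zero. -/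
def ksRHS (N : ℕ) (χ : ℝ) (x : ℕ → ℝ) (i : ℕ) : ℝ :=
  (if i < N then -(1 / (x (i + 1) - x i)) else 0)
    + (if 1 < i then 1 / (x i - x (i - 1)) else 0)
    + 2 * χ * hN N * ∑ j ∈ (Finset.Icc 1 N).erase i, 1 / (x j - x i)

/-- A solution of the discrete Keller–Segel particle system on `[0,T)`. -/
structure IsKSSol (N : ℕ) (χ T : ℝ) (X : ℕ → ℝ → ℝ) : Prop where
  ordered : ∀ t ∈ Set.Ico (0 : ℝ) T, ∀ i, 1 ≤ i → i < N → X i t < X (i + 1) t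
  ode : ∀ i ∈ Finset.Icc 1 N, ∀ t ∈ Set.Ico (0 : ℝ) T,
    HasDerivAt (X i) (ksRHS N χ (fun j => X j t) i) t

/-- A solution on its maximal interval of existence `[0,T)`: it cannot be extended to a
solution on any larger interval `[0,T')`. -/
def IsMaxKSSol (N : ℕ) (χ T : ℝ) (X : ℕ → ℝ → ℝ) : Prop :=
  IsKSSol N χ T X ∧
    ∀ T' > T, ∀ X' : ℕ → ℝ → ℝ,
      (∀ i ∈ Finset.Icc 1 N, ∀ t ∈ Set.Ico (0 : ℝ) T, X' i t = X i t) →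
        ¬ IsKSSol N χ T' X'

/-- `liminf_{t → T⁻} (X_{i+1}(t) - X_i(t)) = 0`. -/
def gapLiminfZero (X : ℕ → ℝ → ℝ) (T : ℝ) (i : ℕ) : Prop :=
  Filter.liminf (fun t => X (i + 1) t - X i t) (nhdsWithin T (Set.Iio T)) = 0

/-- A nonempty set of consecutive indices in `{1,…,N}` all of whose consecutive gaps have
liminf zero at time `T`. -/
def IsWeakCand (N : ℕ) (X : ℕ → ℝ → ℝ) (T : ℝ) (I : Finset ℕ) : Prop :=
  I.Nonempty ∧ (∃ a b, 1 ≤ a ∧ b ≤ N ∧ I = Finset.Icc a b) ∧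
    ∀ i, i ∈ I → i + 1 ∈ I → gapLiminfZero X T i

/-- A weak blow-up set: maximal for inclusion among weak candidates. -/
def IsWeakBlowup (N : ℕ) (X : ℕ → ℝ → ℝ) (T : ℝ) (I : Finset ℕ) : Prop :=
  IsWeakCand N X T I ∧ ∀ J, IsWeakCand N X T J → I ⊆ J → J = I

/-- A strong blow-up set: all consecutive gaps tend to zero, and the particles of `I` stay
uniformly away from the particles outside `I`. -/
def IsStrongBlowup (N : ℕ) (X : ℕ → ℝ → ℝ) (T : ℝ) (I : Finset ℕ) : Prop :=
  IsWeakBlowup N X T I ∧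
    (∀ i, i ∈ I → i + 1 ∈ I →
      Filter.Tendsto (fun t => X (i + 1) t - X i t) (nhdsWithin T (Set.Iio T)) (nhds 0)) ∧
    ∃ c > 0, ∀ i ∈ I, ∀ j ∈ Finset.Icc 1 N, j ∉ I → ∀ t ∈ Set.Ico (0 : ℝ) T,
      1 / c ≤ |X i t - X j t|

/-- Mean of the configuration `x` over the index set `I`. -/
def meanOn (I : Finset ℕ) (x : ℕ → ℝ) : ℝ := (∑ i ∈ I, x i) / (I.card : ℝ)

/-- Variance `Π²_I` of the configuration `x` over the index set `I`. -/
def var2 (I : Finset ℕ) (x : ℕ → ℝ) : ℝ := ∑ i ∈ I, (x i - meanOn I x) ^ 2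

/-- Exterior interaction potential `H_{IO,m} = ∑_{j∈O} ∑_{i∈I} 1/(x_j - x_i)^m`,
where `O = {1,…,N} \ I`. -/
def extPot (N : ℕ) (I : Finset ℕ) (m : ℕ) (x : ℕ → ℝ) : ℝ :=
  ∑ j ∈ (Finset.Icc 1 N) \ I, ∑ i ∈ I, 1 / (x j - x i) ^ m


/-!
Multiply the `i`-th equation by `X_i` and sum. The two nearest-neighbour terms containing the
gap `X_{i+1} - X_i` combine into `(X_{i+1} - X_i) / (X_{i+1} - X_i) = 1`, giving `N - 1`. In the
interaction sum, pairing `(i, j)` with `(j, i)` gives `x_i / (x_j - x_i) + x_j / (x_i - x_j) = -1`,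
so it equals `-N (N - 1) / 2`.
-/

open Finset

lemma Finset.sum_sum_erase_div_sub {ι : Type*} [DecidableEq ι] {s : Finset ι} {x : ι → ℝ}
    (hx : Set.InjOn x s) :
    ∑ i ∈ s, ∑ j ∈ s.erase i, x i / (x j - x i) = -(#s * (#s - 1) / 2) := by
  have hswap : ∑ i ∈ s, ∑ j ∈ s.erase i, x i / (x j - x i)
      = ∑ i ∈ s, ∑ j ∈ s.erase i, x j / (x i - x j) :=
    sum_comm' fun i j => by simp only [mem_erase]; tauto
  have hpair : ∀ i ∈ s, ∀ j ∈ s.erase i, x i / (x j - x i) + x j / (x i - x j) = -1 := by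
    intro i hi j hj
    have hij : x j - x i ≠ 0 :=
      sub_ne_zero.2 fun h => (ne_of_mem_erase hj) (hx (mem_of_mem_erase hj) hi h)
    rw [← neg_sub (x j), div_neg, ← sub_eq_add_neg, ← sub_div, ← neg_sub, neg_div, div_self hij]
  have hrow : ∀ i ∈ s, ∑ j ∈ s.erase i, (x i / (x j - x i) + x j / (x i - x j)) = 1 - #s := by
    intro i hi
    rw [sum_congr rfl (hpair i hi), sum_const, card_erase_of_mem hi, nsmul_eq_mul,
      Nat.cast_sub (card_pos.2 ⟨i, hi⟩)]
    ring
  have htwice : 2 * ∑ i ∈ s, ∑ j ∈ s.erase i, x i / (x j - x i) = -(#s * (#s - 1)) := by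
    rw [two_mul]
    nth_rewrite 2 [hswap]
    simp_rw [← sum_add_distrib]
    rw [sum_congr rfl hrow, sum_const, nsmul_eq_mul]
    ring
  linarith

lemma Nat.strictMonoOn_Icc_of_lt_succ {β : Type*} [Preorder β] {a b : ℕ} {x : ℕ → β}
    (hx : ∀ i, a ≤ i → i < b → x i < x (i + 1)) : StrictMonoOn x (Set.Icc a b) := by
  refine strictMonoOn_of_lt_succ Set.ordConnected_Icc fun i _ hi hi' => ?_
  rw [Order.succ_eq_add_one] at hi' ⊢
  exact hx i hi.1 (by simp only [Set.mem_Icc] at hi'; omega)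

lemma sum_mul_nearestNeighbourDrift {N : ℕ} (hN1 : 1 ≤ N) {x : ℕ → ℝ}
    (hx : ∀ i, 1 ≤ i → i < N → x i ≠ x (i + 1)) :
    ∑ i ∈ Icc 1 N, x i * (if i < N then -(1 / (x (i + 1) - x i)) else 0)
      + ∑ i ∈ Icc 1 N, x i * (if 1 < i then 1 / (x i - x (i - 1)) else 0) = N - 1 := by
  have hright : (Icc 1 N).filter (· < N) = Ico 1 N := by
    ext; simp only [mem_filter, mem_Icc, mem_Ico]; omega
  have hleft : (Icc 1 N).filter (1 < ·) = Ico (1 + 1) (N + 1) := by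
    ext; simp only [mem_filter, mem_Icc, mem_Ico]; omega
  simp only [mul_ite, mul_zero, ← sum_filter, hright, hleft, ← sum_Ico_add',
    add_tsub_cancel_right, ← sum_add_distrib]
  rw [sum_congr rfl fun i hi => ?_, sum_const, Nat.card_Ico, nsmul_one, Nat.cast_sub hN1,
    Nat.cast_one]
  have hgap : x (i + 1) - x i ≠ 0 := sub_ne_zero.2 (hx i (mem_Ico.1 hi).1 (mem_Ico.1 hi).2).symm
  field_simp
  ring

lemma sum_mul_ksRHS {N : ℕ} (hN1 : 1 ≤ N) (χ : ℝ) {x : ℕ → ℝ}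
    (hx : ∀ i, 1 ≤ i → i < N → x i < x (i + 1)) :
    ∑ i ∈ Icc 1 N, x i * ksRHS N χ x i = ((N : ℝ) - 1) * (1 - χ * hN N * N) := by
  have hinj : Set.InjOn x (Icc 1 N) := by
    simpa using (Nat.strictMonoOn_Icc_of_lt_succ hx).injOn
  have hinteraction :
      ∑ i ∈ Icc 1 N, x i * (2 * χ * hN N * ∑ j ∈ (Icc 1 N).erase i, 1 / (x j - x i))
        = 2 * χ * hN N * -(N * (N - 1) / 2) := by
    simp_rw [mul_left_comm (x _), mul_sum, mul_one_div, ← mul_sum]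
    rw [sum_sum_erase_div_sub hinj, Nat.card_Icc, add_tsub_cancel_right]
  simp only [ksRHS, mul_add, sum_add_distrib]
  rw [sum_mul_nearestNeighbourDrift hN1 fun i h1 h2 => (hx i h1 h2).ne, hinteraction, hN]
  field_simp
  ring

theorem HasDerivAt.half_sum_sq {ι : Type*} {s : Finset ι} {f : ι → ℝ → ℝ} {f' : ι → ℝ}
    {t : ℝ} (hf : ∀ i ∈ s, HasDerivAt (f i) (f' i) t) :
    HasDerivAt (fun u => (1 / 2) * ∑ i ∈ s, f i u ^ 2) (∑ i ∈ s, f i t * f' i) t :=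
  ((HasDerivAt.fun_sum fun i hi => (hf i hi).pow 2).const_mul (1 / 2)).congr_deriv <| by
    rw [mul_sum]
    exact sum_congr rfl fun i _ => by push_cast; ring

theorem stmt1_general (N : ℕ) (hN2 : 2 ≤ N) (χ T : ℝ)
    (X : ℕ → ℝ → ℝ) (hX : IsKSSol N χ T X)
    (t : ℝ) (ht : t ∈ Set.Ico (0 : ℝ) T) :
    HasDerivAt (fun s => (1 / 2) * ∑ i ∈ Finset.Icc 1 N, (X i s) ^ 2)
      (((N : ℝ) - 1) * (1 - χ * hN N * N)) t := by
  rw [← sum_mul_ksRHS (by omega) χ (hX.ordered t ht)]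
  exact HasDerivAt.half_sum_sq fun i hi => hX.ode i hi t ht

/-- along any solution, the second moment `Π²(t) = ∑_{i=1}^N X_i(t)²` satisfies
`(1/2) d/dt Π²(t) = (N-1)(1 - χ h_N N)` for every `t ∈ [0,T)`. -/
theorem stmt1 (N : ℕ) (hN2 : 2 ≤ N) (χ T : ℝ) (hχ : 0 < χ)
    (X : ℕ → ℝ → ℝ) (hX : IsKSSol N χ T X)
    (t : ℝ) (ht : t ∈ Set.Ico (0 : ℝ) T) :
    HasDerivAt (fun s => (1 / 2) * ∑ i ∈ Finset.Icc 1 N, (X i s) ^ 2)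
      (((N : ℝ) - 1) * (1 - χ * hN N * N)) t :=
  stmt1_general N hN2 χ T X hX t ht
end
end

section
/- Discrete logarithmic Hardy–Littlewood–Sobolev inequality: for every integer p ≥ 2 and all real numbers x_1 < x_2 < ⋯ < x_p, one has −∑_{i=1}^{p−1} log(x_{i+1}−x_i) + (1/p) ∑_{1≤i≠j≤p} log|x_i−x_j| ≥ 0. -/
open Finset

/-! For each fixed `i`, the map `j ↦ (j if j < i, else j - 1)` is a bijection from the other
indices onto the gaps `1, …, p - 1`, and the gap it names lies between `x i` and `x j`, so
`log (x (k + 1) - x k) ≤ log |x i - x j|` termwise. Hence every one of the `p` rows of the double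
sum dominates the sum of the logarithmic gaps. -/

lemma sum_erase_Icc_eq_sum_Icc_skip {M : Type*} [AddCommMonoid M] (f : ℕ → M) {p i : ℕ}
    (hi : i ∈ Icc 1 p) :
    ∑ j ∈ (Icc 1 p).erase i, f j = ∑ k ∈ Icc 1 (p - 1), f (if k < i then k else k + 1) := by
  rw [mem_Icc] at hi
  symm
  refine sum_nbij' (fun k => if k < i then k else k + 1) (fun j => if j < i then j else j - 1)
    ?_ ?_ ?_ ?_ fun _ _ => rfl <;> intro k hk <;> simp only [mem_Icc, mem_erase] at hk ⊢ <;>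
    split_ifs <;> omega

section Gaps

variable {x : ℕ → ℝ} {p : ℕ}

lemma strictMonoOn_Icc_of_lt_succ (hx : ∀ i, 1 ≤ i → i < p → x i < x (i + 1)) :
    StrictMonoOn x (Set.Icc 1 p) :=
  strictMonoOn_of_lt_add_one Set.ordConnected_Icc fun i _ hi hi' =>
    hx i hi.1 (Nat.lt_of_succ_le hi'.2)

lemma log_gap_le_log_sub (hx : StrictMonoOn x (Set.Icc 1 p)) {a k b : ℕ} (ha : 1 ≤ a)
    (hak : a ≤ k) (hkb : k + 1 ≤ b) (hb : b ≤ p) :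
    Real.log (x (k + 1) - x k) ≤ Real.log (x b - x a) := by
  have hgap : x k < x (k + 1) := hx ⟨by omega, by omega⟩ ⟨by omega, by omega⟩ (by omega)
  have hlow : x a ≤ x k := hx.monotoneOn ⟨ha, by omega⟩ ⟨by omega, by omega⟩ hak
  have hhigh : x (k + 1) ≤ x b := hx.monotoneOn ⟨by omega, by omega⟩ ⟨by omega, hb⟩ hkb
  exact Real.log_le_log (sub_pos.2 hgap) (by linarith)

lemma sum_log_gaps_le_sum_log_abs_sub (hx : StrictMonoOn x (Set.Icc 1 p)) {i : ℕ}
    (hi : i ∈ Icc 1 p) :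
    ∑ k ∈ Icc 1 (p - 1), Real.log (x (k + 1) - x k)
      ≤ ∑ j ∈ (Icc 1 p).erase i, Real.log |x i - x j| := by
  rw [sum_erase_Icc_eq_sum_Icc_skip _ hi]
  refine sum_le_sum fun k hk => ?_
  rw [mem_Icc] at hi hk
  split_ifs with hki
  · have hle : x k ≤ x i := hx.monotoneOn ⟨hk.1, by omega⟩ hi hki.le
    rw [abs_of_nonneg (sub_nonneg.2 hle)]
    exact log_gap_le_log_sub hx hk.1 le_rfl hki hi.2
  · have hle : x i ≤ x (k + 1) := hx.monotoneOn hi ⟨by omega, by omega⟩ (by omega)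
    rw [abs_sub_comm, abs_of_nonneg (sub_nonneg.2 hle)]
    exact log_gap_le_log_sub hx hi.1 (by omega) le_rfl (by omega)

end Gaps

theorem stmt3_general (p : ℕ) (x : ℕ → ℝ)
    (hx : ∀ i, 1 ≤ i → i < p → x i < x (i + 1)) :
    0 ≤ -∑ i ∈ Finset.Icc 1 (p - 1), Real.log (x (i + 1) - x i)
        + (1 / (p : ℝ)) *
          ∑ i ∈ Finset.Icc 1 p, ∑ j ∈ (Finset.Icc 1 p).erase i, Real.log |x i - x j| := by
  have hrows : (p : ℝ) * ∑ k ∈ Icc 1 (p - 1), Real.log (x (k + 1) - x k)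
      ≤ ∑ i ∈ Icc 1 p, ∑ j ∈ (Icc 1 p).erase i, Real.log |x i - x j| := by
    simpa using card_nsmul_le_sum (Icc 1 p) _ _
      fun i hi => sum_log_gaps_le_sum_log_abs_sub (strictMonoOn_Icc_of_lt_succ hx) hi
  rcases Nat.eq_zero_or_pos p with rfl | hp
  · simp
  · have hp' : (0 : ℝ) < p := Nat.cast_pos.2 hp
    rw [one_div, inv_mul_eq_div, neg_add_eq_sub, sub_nonneg, le_div_iff₀' hp']
    exact hrows

/-- discrete logarithmic Hardy–Littlewood–Sobolev inequality: for every
integer `p ≥ 2` and all reals `x_1 < x_2 < ⋯ < x_p`,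
`-∑_{i=1}^{p-1} log(x_{i+1}-x_i) + (1/p) ∑_{1≤i≠j≤p} log|x_i-x_j| ≥ 0`. -/
theorem stmt3 (p : ℕ) (hp : 2 ≤ p) (x : ℕ → ℝ)
    (hx : ∀ i, 1 ≤ i → i < p → x i < x (i + 1)) :
    0 ≤ -∑ i ∈ Finset.Icc 1 (p - 1), Real.log (x (i + 1) - x i)
        + (1 / (p : ℝ)) *
          ∑ i ∈ Finset.Icc 1 p, ∑ j ∈ (Finset.Icc 1 p).erase i, Real.log |x i - x j| :=
  stmt3_general p x hx
end

section
/- Let X be a solution of the discrete Keller–Segel particle system on [0,T), and let I ⊆ {1,…,N} be a set of consecutive indices with complement O. Then for every t ∈ [0,T): d/dt H_{IO,2}(t) ≤ (12 + 14χ + 4N^{1/4}) · H_{IO,4}(t). Consequently, since H_{IO,4} ≤ H_{IO,2}², one has d/dt H_{IO,2}(t) ≤ C(N,χ) · H_{IO,2}(t)² with C(N,χ) = 12 + 14χ + 4N^{1/4}. -/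
open Filter

noncomputable section

/-!
Differentiating, `d/dt H_{IO,2} = ∑_{j ∈ O, i ∈ I} 2 (Ẋ_i - Ẋ_j) / (X_j - X_i)³`, and the
velocity splits into the nearest-neighbour drift `1/(X_i - X_{i-1}) - 1/(X_{i+1} - X_i)` and the
attraction `2χh_N ∑_{l ≠ i} 1/(X_l - X_i)`.

For the attraction, the pair `(i, j)` contributes `2/(X_j - X_i)⁴` minus a sum of three-body terms
over the remaining particles `l`; symmetrising in `l ↔ i` (for `l ∈ I`) or `l ↔ j` (for `l ∈ O`)
makes these terms nonnegative, so the attraction costs at most `2 · 4χh_N H_{IO,4}`.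

For the drift, summation by parts along a block of consecutive particles turns the sum against
`u ↦ (y - u)⁻³` into difference quotients, each at most three times the fourth inverse power of
the distance from `y` to the nearer end of the gap, plus two boundary terms. For the blocks of
`O` these vanish or have a good sign. For the block `I` one survives: it pairs the gap between
`I` and its neighbour on the side away from `y` with at most `N` distances to `O`, and the AM-GM
inequality `4ab³ ≤ a⁴ + 3b⁴` at scale `N^{1/4}` bounds it by `N^{1/4} H_{IO,4}`. Finally
`H_{IO,4} ≤ H_{IO,2}²` because all terms are nonnegative.
-/

open Finset

section Attraction

variable {ι : Type*} [DecidableEq ι]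

def attraction (S : Finset ι) (x : ι → ℝ) (i : ι) : ℝ :=
  ∑ l ∈ S.erase i, 1 / (x l - x i)

def triKernel (u z w : ℝ) : ℝ :=
  1 / ((z - u) ^ 2 * ((w - u) * (w - z)))

lemma triKernel_add_triKernel_swap_left {u z w : ℝ} (huz : u ≠ z) (huw : u ≠ w)
    (hzw : z ≠ w) :
    triKernel u z w + triKernel w z u = 1 / ((z - u) ^ 2 * (z - w) ^ 2) := by
  have := sub_ne_zero.2 huz; have := sub_ne_zero.2 huw; have := sub_ne_zero.2 hzw
  have := sub_ne_zero.2 huz.symm; have := sub_ne_zero.2 huw.symm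
  have := sub_ne_zero.2 hzw.symm
  unfold triKernel
  field_simp
  ring

lemma triKernel_add_triKernel_swap_right {u z w : ℝ} (huz : u ≠ z) (huw : u ≠ w)
    (hzw : z ≠ w) :
    triKernel u z w + triKernel u w z = 1 / ((z - u) ^ 2 * (w - u) ^ 2) := by
  have := sub_ne_zero.2 huz.symm; have := sub_ne_zero.2 huw.symm
  have := sub_ne_zero.2 hzw; have := sub_ne_zero.2 hzw.symm
  unfold triKernel
  field_simp
  ring

lemma sum_sum_erase_nonneg {s : Finset ι} {F : ι → ι → ℝ}
    (hF : ∀ i ∈ s, ∀ l ∈ s, i ≠ l → 0 ≤ F i l + F l i) :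
    0 ≤ ∑ i ∈ s, ∑ l ∈ s.erase i, F i l := by
  have hswap : ∑ i ∈ s, ∑ l ∈ s.erase i, F l i = ∑ i ∈ s, ∑ l ∈ s.erase i, F i l := by
    simp only [← filter_ne' s, sum_filter]
    rw [sum_comm]
    exact sum_congr rfl fun i _ => sum_congr rfl fun l _ => if_congr ne_comm rfl rfl
  have hsym : 0 ≤ ∑ i ∈ s, ∑ l ∈ s.erase i, (F i l + F l i) :=
    sum_nonneg fun i hi => sum_nonneg fun l hl =>
      hF i hi l (mem_erase.1 hl).2 (mem_erase.1 hl).1.symm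
  simp only [sum_add_distrib, hswap] at hsym
  linarith

variable {S I : Finset ι} {x : ι → ℝ}

lemma attraction_sub_div_eq (hx : Set.InjOn x S) {i j : ι} (hi : i ∈ S) (hj : j ∈ S)
    (hij : i ≠ j) :
    (attraction S x i - attraction S x j) / (x j - x i) ^ 3
      = 2 / (x j - x i) ^ 4 - ∑ l ∈ (S.erase i).erase j, triKernel (x i) (x j) (x l) := by
  have hji : x j - x i ≠ 0 := sub_ne_zero.2 fun h => hij (hx hi hj h.symm)
  have hij' : x i - x j ≠ 0 := sub_ne_zero.2 fun h => hij (hx hi hj h)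
  have hsplit_i : attraction S x i
      = ∑ l ∈ (S.erase i).erase j, 1 / (x l - x i) + 1 / (x j - x i) :=
    (sum_erase_add _ _ (mem_erase.2 ⟨hij.symm, hj⟩)).symm
  have hsplit_j : attraction S x j
      = ∑ l ∈ (S.erase i).erase j, 1 / (x l - x j) + 1 / (x i - x j) := by
    rw [erase_right_comm]
    exact (sum_erase_add _ _ (mem_erase.2 ⟨hij, hi⟩)).symm
  have hterm : ∀ l ∈ (S.erase i).erase j,
      (1 / (x l - x i) - 1 / (x l - x j)) / (x j - x i) ^ 3 = -triKernel (x i) (x j) (x l) := by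
    intro l hl
    obtain ⟨hlj, hli, hl⟩ : l ≠ j ∧ l ≠ i ∧ l ∈ S := by simpa using hl
    have := sub_ne_zero.2 fun h => hli (hx hl hi h)
    have := sub_ne_zero.2 fun h => hlj (hx hl hj h)
    unfold triKernel
    field_simp
    ring
  calc (attraction S x i - attraction S x j) / (x j - x i) ^ 3
      = ∑ l ∈ (S.erase i).erase j, (1 / (x l - x i) - 1 / (x l - x j)) / (x j - x i) ^ 3
          + (1 / (x j - x i) - 1 / (x i - x j)) / (x j - x i) ^ 3 := by
        rw [hsplit_i, hsplit_j, ← sum_div, sum_sub_distrib]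
        ring
    _ = _ := by
        rw [sum_congr rfl hterm, sum_neg_distrib]
        field_simp
        ring

theorem sum_sum_attraction_sub_div_le (hx : Set.InjOn x S) (hI : I ⊆ S) :
    ∑ j ∈ S \ I, ∑ i ∈ I, (attraction S x i - attraction S x j) / (x j - x i) ^ 3
      ≤ 2 * ∑ j ∈ S \ I, ∑ i ∈ I, 1 / (x j - x i) ^ 4 := by
  set O := S \ I
  have hO : ∀ j ∈ O, j ∈ S := fun j hj => (Finset.mem_sdiff.1 hj).1
  have hne : ∀ j ∈ O, ∀ i ∈ I, i ≠ j := fun j hj i hi h => (Finset.mem_sdiff.1 hj).2 (h ▸ hi)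
  have hxne : ∀ p ∈ S, ∀ q ∈ S, p ≠ q → x p ≠ x q := fun p hp q hq hpq h => hpq (hx hp hq h)
  have hsplit : ∀ j ∈ O, ∀ i ∈ I, (S.erase i).erase j = I.erase i ∪ O.erase j := by
    intro j hj i hi
    ext l
    by_cases hl : l ∈ I <;> aesop
  have hdisj : ∀ j ∈ O, ∀ i ∈ I, Disjoint (I.erase i) (O.erase j) :=
    fun j _ i _ => disjoint_of_subset_left (erase_subset _ _)
      (disjoint_of_subset_right (erase_subset _ _) disjoint_sdiff)
  have hthird_in_I : 0 ≤ ∑ j ∈ O, ∑ i ∈ I, ∑ l ∈ I.erase i, triKernel (x i) (x j) (x l) := by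
    refine sum_nonneg fun j hj => sum_sum_erase_nonneg fun i hi l hl hil => ?_
    rw [triKernel_add_triKernel_swap_left (hxne i (hI hi) j (hO j hj) (hne j hj i hi))
      (hxne i (hI hi) l (hI hl) hil) (hxne j (hO j hj) l (hI hl) (hne j hj l hl).symm)]
    positivity
  have hthird_in_O : 0 ≤ ∑ j ∈ O, ∑ i ∈ I, ∑ l ∈ O.erase j, triKernel (x i) (x j) (x l) := by
    rw [sum_comm]
    refine sum_nonneg fun i hi => sum_sum_erase_nonneg fun j hj l hl hjl => ?_
    rw [triKernel_add_triKernel_swap_right (hxne i (hI hi) j (hO j hj) (hne j hj i hi))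
      (hxne i (hI hi) l (hO l hl) (hne l hl i hi)) (hxne j (hO j hj) l (hO l hl) hjl)]
    positivity
  have hrw : ∀ j ∈ O, ∀ i ∈ I, (attraction S x i - attraction S x j) / (x j - x i) ^ 3
      = 2 * (1 / (x j - x i) ^ 4) - (∑ l ∈ I.erase i, triKernel (x i) (x j) (x l)
          + ∑ l ∈ O.erase j, triKernel (x i) (x j) (x l)) := by
    intro j hj i hi
    rw [attraction_sub_div_eq hx (hI hi) (hO j hj) (hne j hj i hi), hsplit j hj i hi,
      sum_union (hdisj j hj i hi)]
    ring
  rw [sum_congr rfl fun j hj => sum_congr rfl fun i hi => hrw j hj i hi]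
  simp only [sum_sub_distrib, sum_add_distrib, ← mul_sum]
  linarith

end Attraction

lemma slope_one_div_pow_three_le {p q : ℝ} (hp : 0 < p) (hpq : p < q) :
    1 / (q - p) * (1 / p ^ 3 - 1 / q ^ 3) ≤ 3 / p ^ 4 := by
  have hq : 0 < q := hp.trans hpq
  have hqp : 0 < q - p := sub_pos.2 hpq
  rw [div_mul_eq_mul_div, one_mul, div_le_div_iff₀ hqp (by positivity),
    div_sub_div _ _ (by positivity) (by positivity), div_mul_eq_mul_div,
    div_le_iff₀ (by positivity)]
  nlinarith [mul_nonneg (pow_nonneg hp.le 3) (mul_nonneg (sq_nonneg (q - p))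
    (by positivity : 0 ≤ 3 * q ^ 2 + 2 * p * q + p ^ 2))]

lemma slope_one_div_sub_pow_three_le_of_lt {u v y : ℝ} (huv : u < v) (hvy : v < y) :
    1 / (v - u) * (1 / (y - v) ^ 3 - 1 / (y - u) ^ 3) ≤ 3 / (y - v) ^ 4 := by
  simpa using slope_one_div_pow_three_le (sub_pos.2 hvy) (sub_lt_sub_left huv y)

lemma slope_one_div_sub_pow_three_le_of_gt {u v y : ℝ} (hyu : y < u) (huv : u < v) :
    1 / (v - u) * (1 / (y - v) ^ 3 - 1 / (y - u) ^ 3) ≤ 3 / (y - u) ^ 4 := by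
  have h := slope_one_div_pow_three_le (sub_pos.2 hyu) (sub_lt_sub_right huv y)
  rw [sub_sub_sub_cancel_right] at h
  rw [show (y - u) ^ 4 = (u - y) ^ 4 by ring, show (y - u) ^ 3 = -(u - y) ^ 3 by ring,
    show (y - v) ^ 3 = -(v - y) ^ 3 by ring, div_neg, div_neg]
  linarith

lemma sum_Icc_sub_succ_mul_eq (g φ : ℕ → ℝ) {m n : ℕ} (hmn : m ≤ n) :
    ∑ i ∈ Icc m n, (g i - g (i + 1)) * φ i
      = g m * φ m - g (n + 1) * φ n + ∑ i ∈ Ico m n, g (i + 1) * (φ (i + 1) - φ i) := by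
  induction n, hmn using Nat.le_induction with
  | base =>
    rw [Icc_self, sum_singleton, Ico_self, sum_empty]
    ring
  | succ n hmn ih =>
    rw [sum_Icc_succ_top (by omega), ih, sum_Ico_succ_top hmn]
    ring

lemma four_mul_mul_pow_three_le {a b : ℝ} (ha : 0 ≤ a) (hb : 0 ≤ b) :
    4 * a * b ^ 3 ≤ a ^ 4 + 3 * b ^ 4 := by
  nlinarith [mul_nonneg (sq_nonneg (a - b)) (by positivity : 0 ≤ a ^ 2 + 2 * a * b + 3 * b ^ 2)]

lemma sum_mul_pow_three_le {ι : Type*} {J : Finset ι} {n : ℕ} (hJ : #J ≤ n) {G : ℝ}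
    (hG : 0 ≤ G) {y : ι → ℝ} (hy : ∀ j ∈ J, 0 ≤ y j) :
    ∑ j ∈ J, G * y j ^ 3 ≤ (n : ℝ) ^ ((1 : ℝ) / 4) * (G ^ 4 + ∑ j ∈ J, y j ^ 4) := by
  rcases J.eq_empty_or_nonempty with rfl | hJne
  · rw [sum_empty, sum_empty, add_zero]
    positivity
  set L : ℝ := (n : ℝ) ^ ((1 : ℝ) / 4)
  have hn : (0 : ℝ) < n := by exact_mod_cast hJne.card_pos.trans_le hJ
  have hL : 0 < L := Real.rpow_pos_of_pos hn _
  have hL4 : L ^ 4 = n := by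
    rw [← Real.rpow_natCast, ← Real.rpow_mul hn.le]
    norm_num
  -- AM-GM applied to `G` and `L * y j`; the `#J ≤ L ^ 4` copies of `G ^ 4` then cost `L G ^ 4`
  have hpoint : ∀ j ∈ J, G * y j ^ 3 ≤ (G ^ 4 + 3 * L ^ 4 * y j ^ 4) / (4 * L ^ 3) := by
    intro j hj
    rw [le_div_iff₀ (by positivity)]
    have := four_mul_mul_pow_three_le hG (mul_nonneg hL.le (hy j hj))
    nlinarith
  have hsum : 0 ≤ ∑ j ∈ J, y j ^ 4 := sum_nonneg fun j _ => by positivity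
  calc ∑ j ∈ J, G * y j ^ 3 ≤ ∑ j ∈ J, (G ^ 4 + 3 * L ^ 4 * y j ^ 4) / (4 * L ^ 3) :=
        sum_le_sum hpoint
    _ = (#J * G ^ 4 + 3 * L ^ 4 * ∑ j ∈ J, y j ^ 4) / (4 * L ^ 3) := by
        rw [← sum_div, sum_add_distrib, sum_const, nsmul_eq_mul, mul_sum]
    _ ≤ (L ^ 4 * G ^ 4 + 3 * L ^ 4 * ∑ j ∈ J, y j ^ 4) / (4 * L ^ 3) := by
        gcongr
        rw [hL4]
        exact_mod_cast hJ
    _ ≤ L * (G ^ 4 + ∑ j ∈ J, y j ^ 4) := by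
        rw [div_le_iff₀ (by positivity)]
        nlinarith [pow_pos hL 4, mul_nonneg (pow_pos hL 4).le hsum,
          mul_nonneg (pow_pos hL 4).le (pow_nonneg (sq_nonneg G) 2)]

section Drift

variable {N : ℕ} {x : ℕ → ℝ}

-- `1 / (x k - x (k - 1))`, and zero unless `k - 1` and `k` are both particles: this encodes
-- the convention that the boundary terms of the ODE vanish
def gapInv (N : ℕ) (x : ℕ → ℝ) (k : ℕ) : ℝ :=
  if 1 < k ∧ k ≤ N then 1 / (x k - x (k - 1)) else 0

def gapDrift (N : ℕ) (x : ℕ → ℝ) (i : ℕ) : ℝ :=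
  gapInv N x i - gapInv N x (i + 1)

lemma gapInv_nonneg (hx : StrictMonoOn x (Set.Icc 1 N)) (k : ℕ) : 0 ≤ gapInv N x k := by
  unfold gapInv
  split_ifs with hk
  · have : x (k - 1) < x k := hx ⟨by omega, by omega⟩ ⟨by omega, hk.2⟩ (by omega)
    exact one_div_nonneg.2 (sub_nonneg.2 this.le)
  · exact le_rfl

lemma gapInv_succ {i : ℕ} (hi : 1 ≤ i) (hiN : i + 1 ≤ N) :
    gapInv N x (i + 1) = 1 / (x (i + 1) - x i) := by
  simp [gapInv, show 1 < i + 1 by omega, hiN]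

lemma gapInv_one : gapInv N x 1 = 0 := by simp [gapInv]

lemma gapInv_of_lt {k : ℕ} (hN : N < k) : gapInv N x k = 0 := by simp [gapInv, hN.not_ge]

variable {m n : ℕ} {y : ℝ}

lemma sum_gapDrift_div_le_of_lt (hx : StrictMonoOn x (Set.Icc 1 N)) (hm : 1 ≤ m)
    (hmn : m ≤ n) (hn : n ≤ N) (hy : x n < y) :
    ∑ i ∈ Icc m n, gapDrift N x i / (y - x i) ^ 3
      ≤ gapInv N x m / (y - x m) ^ 3 + 3 * ∑ i ∈ Icc m n, 1 / (y - x i) ^ 4 := by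
  simp only [gapDrift, div_eq_mul_one_div (gapInv N x _ - _)]
  rw [sum_Icc_sub_succ_mul_eq _ _ hmn]
  have hlast : 0 ≤ gapInv N x (n + 1) / (y - x n) ^ 3 :=
    div_nonneg (gapInv_nonneg hx _) (by have := sub_pos.2 hy; positivity)
  have hinterior : ∑ i ∈ Ico m n,
      gapInv N x (i + 1) * (1 / (y - x (i + 1)) ^ 3 - 1 / (y - x i) ^ 3)
        ≤ ∑ i ∈ Icc m n, 3 / (y - x i) ^ 4 :=
    calc _ ≤ ∑ i ∈ Ico m n, 3 / (y - x (i + 1)) ^ 4 := by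
          refine sum_le_sum fun i hi => ?_
          obtain ⟨hmi, hin⟩ := mem_Ico.1 hi
          rw [gapInv_succ (by omega) (by omega)]
          exact slope_one_div_sub_pow_three_le_of_lt
            (hx ⟨by omega, by omega⟩ ⟨by omega, by omega⟩ (by omega))
            ((hx.monotoneOn ⟨by omega, by omega⟩ ⟨by omega, hn⟩ hin).trans_lt hy)
      _ = ∑ i ∈ Ioc m n, 3 / (y - x i) ^ 4 := by
          rw [sum_Ico_add' (fun i => 3 / (y - x i) ^ 4), Ico_add_one_add_one_eq_Ioc]
      _ ≤ _ := sum_le_sum_of_subset_of_nonneg Ioc_subset_Icc_self fun i _ _ => by positivity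
  simp only [mul_sum, mul_one_div] at hinterior ⊢
  linarith

lemma sum_gapDrift_div_le_of_gt (hx : StrictMonoOn x (Set.Icc 1 N)) (hm : 1 ≤ m)
    (hmn : m ≤ n) (hn : n ≤ N) (hy : y < x m) :
    ∑ i ∈ Icc m n, gapDrift N x i / (y - x i) ^ 3
      ≤ gapInv N x (n + 1) / (x n - y) ^ 3 + 3 * ∑ i ∈ Icc m n, 1 / (y - x i) ^ 4 := by
  simp only [gapDrift, div_eq_mul_one_div (gapInv N x _ - _)]
  rw [sum_Icc_sub_succ_mul_eq _ _ hmn]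
  have hfirst : gapInv N x m / (y - x m) ^ 3 ≤ 0 :=
    div_nonpos_of_nonneg_of_nonpos (gapInv_nonneg hx _)
      (Odd.pow_nonpos (by decide) (sub_nonpos.2 hy.le))
  have hlast : gapInv N x (n + 1) / (y - x n) ^ 3 = -(gapInv N x (n + 1) / (x n - y) ^ 3) := by
    rw [show (y - x n) ^ 3 = -(x n - y) ^ 3 by ring, div_neg]
  have hinterior : ∑ i ∈ Ico m n,
      gapInv N x (i + 1) * (1 / (y - x (i + 1)) ^ 3 - 1 / (y - x i) ^ 3)
        ≤ ∑ i ∈ Icc m n, 3 / (y - x i) ^ 4 :=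
    calc _ ≤ ∑ i ∈ Ico m n, 3 / (y - x i) ^ 4 := by
          refine sum_le_sum fun i hi => ?_
          obtain ⟨hmi, hin⟩ := mem_Ico.1 hi
          rw [gapInv_succ (by omega) (by omega)]
          exact slope_one_div_sub_pow_three_le_of_gt
            (hy.trans_le (hx.monotoneOn ⟨hm, by omega⟩ ⟨by omega, by omega⟩ hmi))
            (hx ⟨by omega, by omega⟩ ⟨by omega, by omega⟩ (by omega))
      _ ≤ _ := sum_le_sum_of_subset_of_nonneg Ico_subset_Icc_self fun i _ _ => by positivity
  simp only [mul_sum, mul_one_div] at hinterior ⊢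
  linarith

end Drift

section Exterior

variable {N a b : ℕ} {x : ℕ → ℝ}

lemma sum_Icc_sdiff_Icc {M : Type*} [AddCommMonoid M] (f : ℕ → M) (hab : a ≤ b) (hb : b ≤ N) :
    ∑ j ∈ Icc 1 N \ Icc a b, f j = ∑ j ∈ Icc 1 (a - 1), f j + ∑ j ∈ Icc (b + 1) N, f j := by
  have hO : Icc 1 N \ Icc a b = Icc 1 (a - 1) ∪ Icc (b + 1) N := by
    ext j
    simp only [Finset.mem_sdiff, mem_union, mem_Icc]
    omega
  rw [hO, sum_union]
  exact disjoint_left.2 fun j hj hj' => by simp only [mem_Icc] at hj hj'; omega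

lemma gapInv_pow_four_le_sum (a : ℕ) :
    gapInv N x a ^ 4 ≤ ∑ j ∈ Icc 1 (a - 1), 1 / (x j - x a) ^ 4 := by
  unfold gapInv
  split_ifs with ha
  · calc (1 / (x a - x (a - 1))) ^ 4 = 1 / (x (a - 1) - x a) ^ 4 := by
          rw [one_div_pow]
          congr 1
          ring
      _ ≤ _ := single_le_sum (f := fun j => 1 / (x j - x a) ^ 4) (fun j _ => by positivity)
          (mem_Icc.2 ⟨by omega, le_rfl⟩)
  · rw [zero_pow four_ne_zero]
    exact sum_nonneg fun j _ => by positivity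

lemma gapInv_succ_pow_four_le_sum (b : ℕ) :
    gapInv N x (b + 1) ^ 4 ≤ ∑ j ∈ Icc (b + 1) N, 1 / (x j - x b) ^ 4 := by
  unfold gapInv
  split_ifs with hb
  · rw [Nat.add_sub_cancel, one_div_pow]
    exact single_le_sum (f := fun j => 1 / (x j - x b) ^ 4) (fun j _ => by positivity)
      (mem_Icc.2 ⟨le_rfl, hb.2⟩)
  · rw [zero_pow four_ne_zero]
    exact sum_nonneg fun j _ => by positivity

lemma sum_one_div_pow_four_le_extPot {I : Finset ℕ} {i : ℕ} (hi : i ∈ I) :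
    ∑ j ∈ Icc 1 N \ I, 1 / (x j - x i) ^ 4 ≤ extPot N I 4 x :=
  sum_le_sum fun j _ => single_le_sum (f := fun i => 1 / (x j - x i) ^ 4)
    (fun _ _ => by positivity) hi

lemma sum_gapInv_div_pow_three_le (hx : StrictMonoOn x (Set.Icc 1 N)) (ha : 1 ≤ a)
    (hab : a ≤ b) (hb : b ≤ N) :
    ∑ j ∈ Icc (b + 1) N, gapInv N x a / (x j - x a) ^ 3
      ≤ (N : ℝ) ^ ((1 : ℝ) / 4) * ∑ j ∈ Icc 1 N \ Icc a b, 1 / (x j - x a) ^ 4 := by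
  have hpos : ∀ j ∈ Icc (b + 1) N, 0 ≤ 1 / (x j - x a) := fun j hj => by
    obtain ⟨hbj, hjN⟩ := mem_Icc.1 hj
    exact one_div_nonneg.2 (sub_nonneg.2 (hx ⟨ha, by omega⟩ ⟨by omega, hjN⟩ (by omega)).le)
  have hyoung := sum_mul_pow_three_le (n := N) (by simp) (gapInv_nonneg hx a) hpos
  simp only [div_pow, one_pow, mul_one_div] at hyoung
  refine hyoung.trans (mul_le_mul_of_nonneg_left ?_ (by positivity))
  rw [sum_Icc_sdiff_Icc _ hab hb]
  exact add_le_add (gapInv_pow_four_le_sum a) le_rfl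

lemma sum_gapInv_succ_div_pow_three_le (hx : StrictMonoOn x (Set.Icc 1 N))
    (hab : a ≤ b) (hb : b ≤ N) :
    ∑ j ∈ Icc 1 (a - 1), gapInv N x (b + 1) / (x b - x j) ^ 3
      ≤ (N : ℝ) ^ ((1 : ℝ) / 4) * ∑ j ∈ Icc 1 N \ Icc a b, 1 / (x j - x b) ^ 4 := by
  have hpos : ∀ j ∈ Icc 1 (a - 1), 0 ≤ 1 / (x b - x j) := fun j hj => by
    obtain ⟨hj1, hja⟩ := mem_Icc.1 hj
    exact one_div_nonneg.2 (sub_nonneg.2 (hx ⟨hj1, by omega⟩ ⟨by omega, hb⟩ (by omega)).le)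
  have hcard : #(Icc 1 (a - 1)) ≤ N := by
    rw [Nat.card_Icc]
    omega
  have hyoung := sum_mul_pow_three_le hcard (gapInv_nonneg hx (b + 1)) hpos
  simp only [div_pow, one_pow, mul_one_div] at hyoung
  refine hyoung.trans (mul_le_mul_of_nonneg_left ?_ (by positivity))
  have hflip : ∑ j ∈ Icc 1 (a - 1), 1 / (x b - x j) ^ 4
      = ∑ j ∈ Icc 1 (a - 1), 1 / (x j - x b) ^ 4 :=
    sum_congr rfl fun j _ => by congr 1; ring
  rw [sum_Icc_sdiff_Icc _ hab hb, hflip]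
  linarith [gapInv_succ_pow_four_le_sum (N := N) (x := x) b]

lemma sum_sum_gapDrift_outer_le (hx : StrictMonoOn x (Set.Icc 1 N)) (ha : 1 ≤ a)
    (hab : a ≤ b) (hb : b ≤ N) :
    ∑ j ∈ Icc 1 N \ Icc a b, ∑ i ∈ Icc a b, gapDrift N x j / (x i - x j) ^ 3
      ≤ 3 * extPot N (Icc a b) 4 x := by
  have hper : ∀ i ∈ Icc a b, ∑ j ∈ Icc 1 N \ Icc a b, gapDrift N x j / (x i - x j) ^ 3
      ≤ 3 * ∑ j ∈ Icc 1 N \ Icc a b, 1 / (x i - x j) ^ 4 := by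
    intro i hi
    obtain ⟨hai, hib⟩ := mem_Icc.1 hi
    rw [sum_Icc_sdiff_Icc _ hab hb, sum_Icc_sdiff_Icc _ hab hb, mul_add]
    refine add_le_add ?_ ?_
    · rcases Nat.lt_or_ge 1 a with h1a | h1a
      · have := sum_gapDrift_div_le_of_lt hx le_rfl (by omega) (by omega)
          (hx ⟨by omega, by omega⟩ ⟨by omega, by omega⟩ (by omega) : x (a - 1) < x i)
        rwa [gapInv_one, zero_div, zero_add] at this
      · simp [Icc_eq_empty_of_lt (show a - 1 < 1 by omega)]
    · rcases Nat.lt_or_ge b N with hbN | hbN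
      · have := sum_gapDrift_div_le_of_gt hx (by omega) (by omega) le_rfl
          (hx ⟨by omega, by omega⟩ ⟨by omega, by omega⟩ (by omega) : x i < x (b + 1))
        rwa [gapInv_of_lt (Nat.lt_succ_self N), zero_div, zero_add] at this
      · simp [Icc_eq_empty_of_lt (show N < b + 1 by omega)]
  calc _ = ∑ i ∈ Icc a b, ∑ j ∈ Icc 1 N \ Icc a b, gapDrift N x j / (x i - x j) ^ 3 :=
        sum_comm
    _ ≤ ∑ i ∈ Icc a b, 3 * ∑ j ∈ Icc 1 N \ Icc a b, 1 / (x i - x j) ^ 4 := sum_le_sum hper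
    _ = 3 * extPot N (Icc a b) 4 x := by
        rw [← mul_sum, extPot, sum_comm]
        congr 1
        exact sum_congr rfl fun i _ => sum_congr rfl fun j _ => by congr 1; ring

lemma sum_sum_gapDrift_inner_le (hx : StrictMonoOn x (Set.Icc 1 N)) (ha : 1 ≤ a)
    (hab : a ≤ b) (hb : b ≤ N) :
    ∑ j ∈ Icc 1 N \ Icc a b, ∑ i ∈ Icc a b, gapDrift N x i / (x j - x i) ^ 3
      ≤ (3 + 2 * (N : ℝ) ^ ((1 : ℝ) / 4)) * extPot N (Icc a b) 4 x := by
  set L : ℝ := (N : ℝ) ^ ((1 : ℝ) / 4)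
  have hbelow : ∀ j ∈ Icc 1 (a - 1), ∑ i ∈ Icc a b, gapDrift N x i / (x j - x i) ^ 3
      ≤ gapInv N x (b + 1) / (x b - x j) ^ 3 + 3 * ∑ i ∈ Icc a b, 1 / (x j - x i) ^ 4 := by
    intro j hj
    obtain ⟨hj1, hja⟩ := mem_Icc.1 hj
    exact sum_gapDrift_div_le_of_gt hx ha hab hb (hx ⟨hj1, by omega⟩ ⟨ha, by omega⟩ (by omega))
  have habove : ∀ j ∈ Icc (b + 1) N, ∑ i ∈ Icc a b, gapDrift N x i / (x j - x i) ^ 3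
      ≤ gapInv N x a / (x j - x a) ^ 3 + 3 * ∑ i ∈ Icc a b, 1 / (x j - x i) ^ 4 := by
    intro j hj
    obtain ⟨hbj, hjN⟩ := mem_Icc.1 hj
    exact sum_gapDrift_div_le_of_lt hx ha hab hb (hx ⟨by omega, hb⟩ ⟨by omega, hjN⟩ (by omega))
  have hH : 3 * extPot N (Icc a b) 4 x
      = 3 * ∑ j ∈ Icc 1 (a - 1), ∑ i ∈ Icc a b, 1 / (x j - x i) ^ 4
        + 3 * ∑ j ∈ Icc (b + 1) N, ∑ i ∈ Icc a b, 1 / (x j - x i) ^ 4 := by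
    rw [← mul_add, extPot, sum_Icc_sdiff_Icc _ hab hb]
  have hL : 0 ≤ L := by positivity
  have hleft := (sum_gapInv_succ_div_pow_three_le hx hab hb).trans
    (mul_le_mul_of_nonneg_left (sum_one_div_pow_four_le_extPot (right_mem_Icc.2 hab)) hL)
  have hright := (sum_gapInv_div_pow_three_le hx ha hab hb).trans
    (mul_le_mul_of_nonneg_left (sum_one_div_pow_four_le_extPot (left_mem_Icc.2 hab)) hL)
  rw [sum_Icc_sdiff_Icc _ hab hb]
  have := add_le_add (sum_le_sum hbelow) (sum_le_sum habove)
  simp only [sum_add_distrib, ← mul_sum] at this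
  linarith

end Exterior

lemma ksRHS_eq {N i : ℕ} (χ : ℝ) (x : ℕ → ℝ) (hi : i ∈ Icc 1 N) :
    ksRHS N χ x i = gapDrift N x i + 2 * χ * hN N * attraction (Icc 1 N) x i := by
  obtain ⟨h1i, hiN⟩ := mem_Icc.1 hi
  simp only [ksRHS, gapDrift, gapInv, attraction, Nat.add_sub_cancel]
  split_ifs <;> first | omega | ring

lemma hN_le_one (N : ℕ) : hN N ≤ 1 := by
  rw [hN, div_le_one (by positivity)]
  linarith [N.cast_nonneg (α := ℝ)]

theorem sum_sum_ksRHS_sub_div_le {N a b : ℕ} {χ : ℝ} {x : ℕ → ℝ} (hχ : 0 ≤ χ)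
    (hx : StrictMonoOn x (Set.Icc 1 N)) (ha : 1 ≤ a) (hab : a ≤ b) (hb : b ≤ N) :
    ∑ j ∈ Icc 1 N \ Icc a b, ∑ i ∈ Icc a b,
        2 * (ksRHS N χ x i - ksRHS N χ x j) / (x j - x i) ^ 3
      ≤ (12 + 14 * χ + 4 * (N : ℝ) ^ ((1 : ℝ) / 4)) * extPot N (Icc a b) 4 x := by
  have hsplit : ∀ j ∈ Icc 1 N \ Icc a b, ∀ i ∈ Icc a b,
      2 * (ksRHS N χ x i - ksRHS N χ x j) / (x j - x i) ^ 3
        = 2 * (gapDrift N x i / (x j - x i) ^ 3) + 2 * (gapDrift N x j / (x i - x j) ^ 3)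
          + 4 * χ * hN N * ((attraction (Icc 1 N) x i - attraction (Icc 1 N) x j)
            / (x j - x i) ^ 3) := by
    intro j hj i hi
    rw [ksRHS_eq χ x (Finset.mem_sdiff.1 hj).1, ksRHS_eq χ x (Icc_subset_Icc ha hb hi),
      show (x i - x j) ^ 3 = -(x j - x i) ^ 3 by ring, div_neg]
    ring
  rw [sum_congr rfl fun j hj => sum_congr rfl fun i hi => hsplit j hj i hi]
  simp only [sum_add_distrib, ← mul_sum]
  have hinner := sum_sum_gapDrift_inner_le hx ha hab hb
  have houter := sum_sum_gapDrift_outer_le hx ha hab hb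
  have hattr : ∑ j ∈ Icc 1 N \ Icc a b, ∑ i ∈ Icc a b,
      (attraction (Icc 1 N) x i - attraction (Icc 1 N) x j) / (x j - x i) ^ 3
        ≤ 2 * extPot N (Icc a b) 4 x :=
    sum_sum_attraction_sub_div_le (coe_Icc 1 N ▸ hx.injOn) (Icc_subset_Icc ha hb)
  have hH : 0 ≤ extPot N (Icc a b) 4 x :=
    sum_nonneg fun j _ => sum_nonneg fun i _ => by positivity
  have hh : 0 ≤ hN N := by unfold hN; positivity
  have hattr' := mul_le_mul_of_nonneg_left hattr (by positivity : 0 ≤ 4 * χ * hN N)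
  nlinarith [mul_nonneg (mul_nonneg hχ (sub_nonneg.2 (hN_le_one N))) hH]

lemma hasDerivAt_one_div_sub_sq {f g : ℝ → ℝ} {f' g' t : ℝ} (hf : HasDerivAt f f' t)
    (hg : HasDerivAt g g' t) (hne : f t ≠ g t) :
    HasDerivAt (fun s => 1 / (f s - g s) ^ 2) (2 * (g' - f') / (f t - g t) ^ 3) t := by
  have hsub := sub_ne_zero.2 hne
  have hdiff : HasDerivAt (fun s => f s - g s) (f' - g') t := hf.sub hg
  simp only [one_div]
  refine ((hdiff.fun_pow 2).fun_inv (pow_ne_zero 2 hsub)).congr_deriv ?_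
  field_simp
  ring

lemma hasDerivAt_extPot_two {N : ℕ} {I : Finset ℕ} {X : ℕ → ℝ → ℝ} {v : ℕ → ℝ} {t : ℝ}
    (hI : I ⊆ Icc 1 N) (hX : ∀ i ∈ Icc 1 N, HasDerivAt (X i) (v i) t)
    (hne : ∀ j ∈ Icc 1 N \ I, ∀ i ∈ I, X j t ≠ X i t) :
    HasDerivAt (fun s => extPot N I 2 (fun i => X i s))
      (∑ j ∈ Icc 1 N \ I, ∑ i ∈ I, 2 * (v i - v j) / (X j t - X i t) ^ 3) t :=
  HasDerivAt.fun_sum fun j hj => HasDerivAt.fun_sum fun i hi =>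
    hasDerivAt_one_div_sub_sq (hX j (Finset.mem_sdiff.1 hj).1) (hX i (hI hi)) (hne j hj i hi)

lemma extPot_four_le_sq (N : ℕ) (I : Finset ℕ) (x : ℕ → ℝ) :
    extPot N I 4 x ≤ extPot N I 2 x ^ 2 := by
  have hsq : ∀ r : ℝ, 1 / r ^ 4 = (1 / r ^ 2) ^ 2 := fun r => by ring
  simp only [extPot, hsq]
  exact (sum_le_sum fun j _ => sum_sq_le_sq_sum_of_nonneg fun i _ => by positivity).trans
    (sum_sq_le_sq_sum_of_nonneg fun j _ => sum_nonneg fun i _ => by positivity)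

lemma IsKSSol.strictMonoOn {N : ℕ} {χ T : ℝ} {X : ℕ → ℝ → ℝ} (hX : IsKSSol N χ T X) {t : ℝ}
    (ht : t ∈ Set.Ico 0 T) : StrictMonoOn (fun i => X i t) (Set.Icc 1 N) :=
  strictMonoOn_of_lt_succ Set.ordConnected_Icc fun k _ hk hk' => by
    rw [Order.succ_eq_add_one] at hk' ⊢
    exact hX.ordered t ht k hk.1 (by simpa using hk'.2)

theorem stmt6_general (N : ℕ) (χ T : ℝ) (hχ : 0 < χ)
    (X : ℕ → ℝ → ℝ) (hX : IsKSSol N χ T X)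
    (a b : ℕ) (ha : 1 ≤ a) (hb : b ≤ N) (hab : a ≤ b)
    (t : ℝ) (ht : t ∈ Set.Ico (0 : ℝ) T) :
    deriv (fun s => extPot N (Finset.Icc a b) 2 (fun i => X i s)) t
        ≤ (12 + 14 * χ + 4 * (N : ℝ) ^ ((1 : ℝ) / 4)) *
          extPot N (Finset.Icc a b) 4 (fun i => X i t) ∧
      deriv (fun s => extPot N (Finset.Icc a b) 2 (fun i => X i s)) t
        ≤ (12 + 14 * χ + 4 * (N : ℝ) ^ ((1 : ℝ) / 4)) *
          (extPot N (Finset.Icc a b) 2 (fun i => X i t)) ^ 2 := by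
  have hx := hX.strictMonoOn ht
  have hderiv := hasDerivAt_extPot_two (Icc_subset_Icc ha hb) (fun i hi => hX.ode i hi t ht)
    fun j hj i hi => (coe_Icc 1 N ▸ hx.injOn).ne (Finset.mem_sdiff.1 hj).1
      (Icc_subset_Icc ha hb hi) fun h => (Finset.mem_sdiff.1 hj).2 (h ▸ hi)
  have hbound := hderiv.deriv ▸ sum_sum_ksRHS_sub_div_le hχ.le hx ha hab hb
  exact ⟨hbound,
    hbound.trans (mul_le_mul_of_nonneg_left (extPot_four_le_sq _ _ _) (by positivity))⟩

/-- `d/dt H_{IO,2} ≤ (12 + 14χ + 4N^{1/4}) H_{IO,4}`, and consequently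
(since `H_{IO,4} ≤ H_{IO,2}²`) `d/dt H_{IO,2} ≤ (12 + 14χ + 4N^{1/4}) H_{IO,2}²`. -/
theorem stmt6 (N : ℕ) (hN2 : 2 ≤ N) (χ T : ℝ) (hχ : 0 < χ)
    (X : ℕ → ℝ → ℝ) (hX : IsKSSol N χ T X)
    (a b : ℕ) (ha : 1 ≤ a) (hb : b ≤ N) (hab : a ≤ b)
    (t : ℝ) (ht : t ∈ Set.Ico (0 : ℝ) T) :
    deriv (fun s => extPot N (Finset.Icc a b) 2 (fun i => X i s)) t
        ≤ (12 + 14 * χ + 4 * (N : ℝ) ^ ((1 : ℝ) / 4)) *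
          extPot N (Finset.Icc a b) 4 (fun i => X i t) ∧
      deriv (fun s => extPot N (Finset.Icc a b) 2 (fun i => X i s)) t
        ≤ (12 + 14 * χ + 4 * (N : ℝ) ^ ((1 : ℝ) / 4)) *
          (extPot N (Finset.Icc a b) 2 (fun i => X i t)) ^ 2 :=
  stmt6_general N χ T hχ X hX a b ha hb hab t ht
end
end

section
/- Let Y : [0,∞) → ℝ^N be a solution of the rescaled gradient flow Y' = −∇E^resc(Y) satisfying conditions (R1)–(R5) with constant A for an inner set I = [l, l+k−1]. Then there exists C > 0 (depending only on N, χ, α, A) such that for all τ > 0: the ℓ² norm over I of the difference ∇E^resc_k((Y_i)_{i∈I}) − (∇_i E^resc(Y))_{i∈I} is at most C e^{−ατ}. -/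
/-
The local gradient `∇E^resc_k` differs from `∇_I E^resc` only by the interactions of the
inner particles with the outer ones: the nearest-neighbour terms across the two ends of
`I` and the mean-field terms `2χh_N/(Y_j - Y_i)`, `j ∈ O`. Each such term is bounded by
`√𝓗_{IO,2} ≤ A e^{-ατ}` by (R5), and there are at most `N + 2` of them for each `i ∈ I`.
-/

open Filter

noncomputable section

/-- Gradient of the rescaled energy
`E^resc(Y) = -∑ log(Y_{i+1}-Y_i) + χ h_N ∑_{i≠j} log|Y_i-Y_j| - (α/2)|Y|²`
with respect to `Y_i`, with the boundary conventions. -/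
def gradResc (N : ℕ) (χ α : ℝ) (y : ℕ → ℝ) (i : ℕ) : ℝ :=
  (if i < N then 1 / (y (i + 1) - y i) else 0)
    - (if 1 < i then 1 / (y i - y (i - 1)) else 0)
    - 2 * χ * hN N * ∑ j ∈ (Finset.Icc 1 N).erase i, 1 / (y j - y i)
    - α * y i

/-- Gradient of the local rescaled energy `E^resc_k`, restricted to the inner set
`I = [l, l+k-1]`, with respect to `Y_i` for `i ∈ I`. -/
def gradRescK (N : ℕ) (χ α : ℝ) (l k : ℕ) (y : ℕ → ℝ) (i : ℕ) : ℝ :=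
  (if i < l + k - 1 then 1 / (y (i + 1) - y i) else 0)
    - (if l < i then 1 / (y i - y (i - 1)) else 0)
    - 2 * χ * hN N * ∑ j ∈ (Finset.Icc l (l + k - 1)).erase i, 1 / (y j - y i)
    - α * y i

/-- The local rescaled energy
`E^resc_k(Y) = -∑_{i=l}^{l+k-2} log(Y_{i+1}-Y_i) + χ h_N ∑_{i≠j∈I} log|Y_i-Y_j|
  - (α/2) ∑_{i∈I} Y_i²` for the inner set `I = [l, l+k-1]`. -/
def ErescK (N : ℕ) (χ α : ℝ) (l k : ℕ) (y : ℕ → ℝ) : ℝ :=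
  -∑ i ∈ Finset.Icc l (l + k - 2), Real.log (y (i + 1) - y i)
    + χ * hN N * ∑ i ∈ Finset.Icc l (l + k - 1),
        ∑ j ∈ (Finset.Icc l (l + k - 1)).erase i, Real.log |y i - y j|
    - α / 2 * ∑ i ∈ Finset.Icc l (l + k - 1), (y i) ^ 2

/-- A solution of the rescaled gradient flow `Y' = -∇E^resc(Y)` defined for all `τ ≥ 0`
with ordered particles (condition (R1)). -/
structure IsRescSol (N : ℕ) (χ α : ℝ) (Y : ℕ → ℝ → ℝ) : Prop where
  ordered : ∀ τ : ℝ, 0 ≤ τ → ∀ i, 1 ≤ i → i < N → Y i τ < Y (i + 1) τ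
  ode : ∀ i ∈ Finset.Icc 1 N, ∀ τ : ℝ, 0 ≤ τ →
    HasDerivAt (Y i) (-(gradResc N χ α (fun j => Y j τ) i)) τ


open Finset

lemma hN_pos (N : ℕ) : 0 < hN N := by
  unfold hN
  positivity

lemma Real.sqrt_sum_sq_le {ι : Type*} (s : Finset ι) (f : ι → ℝ) {B : ℝ} (hB : 0 ≤ B)
    (hf : ∀ i ∈ s, |f i| ≤ B) : √(∑ i ∈ s, f i ^ 2) ≤ √(#s : ℝ) * B := by
  have hsum : ∑ i ∈ s, f i ^ 2 ≤ #s * B ^ 2 := by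
    simpa using sum_le_card_nsmul s (f · ^ 2) (B ^ 2) fun i hi => by
      simpa only [sq_abs] using pow_le_pow_left₀ (abs_nonneg _) (hf i hi) 2
  calc √(∑ i ∈ s, f i ^ 2) ≤ √(#s * B ^ 2) := Real.sqrt_le_sqrt hsum
    _ = √(#s : ℝ) * B := by rw [Real.sqrt_mul (Nat.cast_nonneg _), Real.sqrt_sq hB]

lemma abs_one_div_sub_le_sqrt_extPot {N : ℕ} {I : Finset ℕ} {x : ℕ → ℝ} {i j : ℕ}
    (hi : i ∈ I) (hj : j ∈ Icc 1 N \ I) : |1 / (x j - x i)| ≤ √(extPot N I 2 x) := by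
  refine Real.abs_le_sqrt ?_
  calc (1 / (x j - x i)) ^ 2 = 1 / (x j - x i) ^ 2 := by rw [div_pow, one_pow]
    _ ≤ ∑ i' ∈ I, 1 / (x j - x i') ^ 2 :=
      single_le_sum (f := fun i' => 1 / (x j - x i') ^ 2) (fun _ _ => by positivity) hi
    _ ≤ extPot N I 2 x :=
      single_le_sum (f := fun j' => ∑ i' ∈ I, 1 / (x j' - x i') ^ 2)
        (fun _ _ => sum_nonneg fun _ _ => by positivity) hj

lemma sum_erase_sub_sum_erase {ι : Type*} [DecidableEq ι] {s t : Finset ι} (hst : s ⊆ t)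
    {i : ι} (hi : i ∈ s) (f : ι → ℝ) :
    ∑ j ∈ t.erase i, f j - ∑ j ∈ s.erase i, f j = ∑ j ∈ t \ s, f j := by
  rw [← sum_sdiff_eq_sub (erase_subset_erase i hst), ← erase_sdiff_distrib,
    erase_eq_of_notMem fun h => (mem_sdiff.mp h).2 hi]

lemma abs_gradRescK_sub_gradResc_le {N l k i : ℕ} {χ α ε : ℝ} {y : ℕ → ℝ} (hl : 1 ≤ l)
    (hlk : l + k - 1 ≤ N) (hi : i ∈ Icc l (l + k - 1)) (hε : 0 ≤ ε)
    (hO : ∀ j ∈ Icc 1 N \ Icc l (l + k - 1), |1 / (y j - y i)| ≤ ε) :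
    |gradRescK N χ α l k y i - gradResc N χ α y i| ≤ (2 + 2 * |χ| * hN N * N) * ε := by
  have hiI := mem_Icc.mp hi
  have hO' : ∀ j ∈ Icc 1 N \ Icc l (l + k - 1), |1 / (y i - y j)| ≤ ε := fun j hj => by
    simpa only [abs_div, abs_sub_comm] using hO j hj
  have hright : |(if i < l + k - 1 then 1 / (y (i + 1) - y i) else 0)
      - (if i < N then 1 / (y (i + 1) - y i) else 0)| ≤ ε := by
    split_ifs <;> first
      | simpa using hε
      | omega
      | simpa using hO (i + 1) (by simp only [Finset.mem_sdiff, mem_Icc]; omega)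
  have hleft : |(if 1 < i then 1 / (y i - y (i - 1)) else 0)
      - (if l < i then 1 / (y i - y (i - 1)) else 0)| ≤ ε := by
    split_ifs <;> first
      | simpa using hε
      | omega
      | simpa using hO' (i - 1) (by simp only [Finset.mem_sdiff, mem_Icc]; omega)
  have houter : |∑ j ∈ Icc 1 N \ Icc l (l + k - 1), 1 / (y j - y i)| ≤ N * ε :=
    calc _ ≤ ∑ j ∈ Icc 1 N \ Icc l (l + k - 1), |1 / (y j - y i)| := abs_sum_le_sum_abs _ _
      _ ≤ #(Icc 1 N \ Icc l (l + k - 1)) * ε := by simpa using sum_le_card_nsmul _ _ _ hO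
      _ ≤ N * ε := by
        gcongr
        exact (card_le_card sdiff_subset).trans (by simp)
  have hdiff : gradRescK N χ α l k y i - gradResc N χ α y i =
      ((if i < l + k - 1 then 1 / (y (i + 1) - y i) else 0)
        - (if i < N then 1 / (y (i + 1) - y i) else 0))
      + ((if 1 < i then 1 / (y i - y (i - 1)) else 0)
        - (if l < i then 1 / (y i - y (i - 1)) else 0))
      + 2 * χ * hN N * ∑ j ∈ Icc 1 N \ Icc l (l + k - 1), 1 / (y j - y i) := by
    rw [← sum_erase_sub_sum_erase (Icc_subset_Icc hl hlk) hi]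
    unfold gradRescK gradResc
    ring
  have hhN := hN_pos N
  calc _ ≤ ε + ε + 2 * |χ| * hN N * (N * ε) := by
        rw [hdiff]
        refine (abs_add_three _ _ _).trans (add_le_add (add_le_add hright hleft) ?_)
        rw [abs_mul, abs_mul, abs_mul, abs_two, abs_of_pos hhN]
        gcongr
    _ = (2 + 2 * |χ| * hN N * N) * ε := by ring

theorem stmt15_general (N k l : ℕ) (hk : 2 ≤ k)
    (hl : 1 ≤ l) (hlk : l + k - 1 ≤ N)
    (χ α : ℝ)
    (Y : ℕ → ℝ → ℝ)
    (A : ℝ) (hA : 0 < A)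
    (hR5 : ∀ τ : ℝ, 0 ≤ τ →
      extPot N (Finset.Icc l (l + k - 1)) 2 (fun i => Y i τ) ≤ A ^ 2 * Real.exp (-2 * α * τ)) :
    ∃ C > 0, ∀ τ : ℝ, 0 < τ →
      Real.sqrt (∑ i ∈ Finset.Icc l (l + k - 1),
          (gradRescK N χ α l k (fun j => Y j τ) i - gradResc N χ α (fun j => Y j τ) i) ^ 2)
        ≤ C * Real.exp (-α * τ) := by
  have hk0 : (0 : ℝ) < k := by exact_mod_cast (by omega : 0 < k)
  have hhN := hN_pos N
  refine ⟨√k * ((2 + 2 * |χ| * hN N * N) * A), by positivity, fun τ hτ => ?_⟩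
  have hdecay : ∀ i ∈ Icc l (l + k - 1), ∀ j ∈ Icc 1 N \ Icc l (l + k - 1),
      |1 / (Y j τ - Y i τ)| ≤ A * Real.exp (-α * τ) := fun i hi j hj =>
    calc _ ≤ √(A ^ 2 * Real.exp (-2 * α * τ)) :=
          (abs_one_div_sub_le_sqrt_extPot hi hj).trans (Real.sqrt_le_sqrt (hR5 τ hτ.le))
      _ = A * Real.exp (-α * τ) := by
        rw [show -2 * α * τ = (2 : ℕ) * (-α * τ) by push_cast; ring, Real.exp_nat_mul,
          ← mul_pow, Real.sqrt_sq (by positivity)]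
  have hcard : #(Icc l (l + k - 1)) = k := by rw [Nat.card_Icc]; omega
  calc _ ≤ √k * ((2 + 2 * |χ| * hN N * N) * (A * Real.exp (-α * τ))) := by
        simpa only [hcard] using Real.sqrt_sum_sq_le _ _ (by positivity) fun i hi =>
          abs_gradRescK_sub_gradResc_le hl hlk hi (by positivity) (hdecay i hi)
    _ = _ := by ring

/-- for a solution of the rescaled gradient flow satisfying (R1)–(R5) with
constant `A` for the inner set `I = [l, l+k-1]`, the ℓ² norm over `I` of the difference
between the local gradient `∇E^resc_k` and the full gradient `∇E^resc` decays like
`C e^{-ατ}`. -/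
theorem stmt15 (N k l : ℕ) (hN2 : 2 ≤ N) (hk : 2 ≤ k) (hkN : k ≤ N)
    (hl : 1 ≤ l) (hlk : l + k - 1 ≤ N)
    (χ α : ℝ) (hχ1 : ((N : ℝ) + 1) / k < χ) (hχ2 : χ < ((N : ℝ) + 1) / ((k : ℝ) - 1))
    (hα : α = ((k : ℝ) - 1) * (χ * k / ((N : ℝ) + 1) - 1))
    (Y : ℕ → ℝ → ℝ) (hY : IsRescSol N χ α Y)
    (A : ℝ) (hA : 0 < A)
    (hR2 : ∀ τ : ℝ, 0 ≤ τ → ∀ i ∈ Finset.Icc l (l + k - 1), |Y i τ| ≤ A)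
    (hR3 : ∀ τ : ℝ, 0 ≤ τ → ∀ i, l ≤ i → i < l + k - 1 → 1 / A ≤ Y (i + 1) τ - Y i τ)
    (hR4 : ∀ j ∈ Finset.Icc 1 N, j ∉ Finset.Icc l (l + k - 1) →
      Filter.Tendsto (fun τ => |Y j τ|) atTop atTop)
    (hR5 : ∀ τ : ℝ, 0 ≤ τ →
      extPot N (Finset.Icc l (l + k - 1)) 2 (fun i => Y i τ) ≤ A ^ 2 * Real.exp (-2 * α * τ)) :
    ∃ C > 0, ∀ τ : ℝ, 0 < τ →
      Real.sqrt (∑ i ∈ Finset.Icc l (l + k - 1),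
          (gradRescK N χ α l k (fun j => Y j τ) i - gradResc N χ α (fun j => Y j τ) i) ^ 2)
        ≤ C * Real.exp (-α * τ) :=
  stmt15_general N k l hk hl hlk χ α Y A hA hR5
end
end
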